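/- Let C4 = ⟨κ⟩ be the cyclic group of order 4 acting ℤ-linearly on ℤ⁶ (standard basis e₁,…,e₆) by κe₁ = −e₁, κe₂ = −e₂, κe₃ = −e₄, κe₄ = e₃, κe₅ = −e₆, κe₆ = e₅, and let Γ₁ = ℤ⁶ ⋊ C4. Then Γ₁ has exactly ten conjugacy classes of subgroups of order two; moreover, six of these classes consist of subgroups whose normalizer in Γ₁ is isomorphic to ℤ² × ℤ/2, and four consist of subgroups whose normalizer in Γ₁ is isomorphic to ℤ² ⋊ ℤ/4, where the generator of ℤ/4 acts on ℤ² by multiplication by −1. -/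

import Mathlib

/-- A monoid hom out of `Multiplicative (ZMod n)` determined by an element `g` with `g ^ n = 1`. -/
def zmodPowHom {G : Type*} [Monoid G] (n : ℕ) [NeZero n] (g : G) (h : g ^ n = 1) :
    Multiplicative (ZMod n) →* G where
  toFun x := g ^ (Multiplicative.toAdd x).val
  map_one' := by
    show g ^ (0 : ZMod n).val = 1
    simp [ZMod.val_zero]
  map_mul' x y := by
    have key : ∀ m : ℕ, g ^ (m % n) = g ^ m := fun m => by
      conv_rhs => rw [← Nat.div_add_mod m n]
      rw [pow_add, pow_mul, h, one_pow, one_mul]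
    show g ^ ((Multiplicative.toAdd x) + (Multiplicative.toAdd y)).val = _
    rw [ZMod.val_add, key, pow_add]

/-- The cyclic group of order 4, written multiplicatively. -/
abbrev C4 : Type := Multiplicative (ZMod 4)

/-- The matrix of the order-four map `κ` on `ℤ⁶`:
`κe₁ = -e₁, κe₂ = -e₂, κe₃ = -e₄, κe₄ = e₃, κe₅ = -e₆, κe₆ = e₅`
(so on coordinate vectors, `(κv)₃ = v₄, (κv)₄ = -v₃, (κv)₅ = v₆, (κv)₆ = -v₅`). -/
def kappaMatrix : Matrix (Fin 6) (Fin 6) ℤ :=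
  !![-1,0,0,0,0,0; 0,-1,0,0,0,0; 0,0,0,1,0,0; 0,0,-1,0,0,0; 0,0,0,0,0,1; 0,0,0,0,-1,0]

/-- The linear action of `C4` on `ℤ⁶` generated by `κ`. -/
noncomputable def kappaRep : Representation ℤ C4 (Fin 6 → ℤ) :=
  zmodPowHom 4 (Matrix.toLinAlgEquiv' kappaMatrix)
    (by rw [← map_pow, show kappaMatrix ^ 4 = 1 by decide, map_one])

/-- The multiplicative automorphism of `Multiplicative M` given by `ρ g`. -/
noncomputable def repEquiv {G M : Type} [Group G] [AddCommGroup M] [Module ℤ M]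
    (ρ : Representation ℤ G M) (g : G) : Multiplicative M ≃* Multiplicative M :=
  AddEquiv.toMultiplicative <| LinearEquiv.toAddEquiv <|
    LinearEquiv.ofLinear (ρ g) (ρ g⁻¹)
      (by rw [← Module.End.mul_eq_comp, ← map_mul, mul_inv_cancel, map_one, Module.End.one_eq_id])
      (by rw [← Module.End.mul_eq_comp, ← map_mul, inv_mul_cancel, map_one, Module.End.one_eq_id])

/-- The action of `G` on `Multiplicative M` by multiplicative automorphisms induced by `ρ`. -/
noncomputable def repMulAut {G M : Type} [Group G] [AddCommGroup M] [Module ℤ M]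
    (ρ : Representation ℤ G M) : G →* MulAut (Multiplicative M) where
  toFun g := repEquiv ρ g
  map_one' := by
    ext x
    show Multiplicative.ofAdd ((ρ 1) (Multiplicative.toAdd x)) = x
    rw [map_one]; rfl
  map_mul' g h := by
    ext x
    show Multiplicative.ofAdd ((ρ (g * h)) (Multiplicative.toAdd x)) =
      Multiplicative.ofAdd ((ρ g) ((ρ h) (Multiplicative.toAdd x)))
    rw [map_mul]; rfl

/-- The orbifold fundamental group `Γ₁ = ℤ⁶ ⋊ C4` of `T⁶/(ℤ/4)`. -/
noncomputable abbrev Gamma1 : Type :=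
  (Multiplicative (Fin 6 → ℤ)) ⋊[repMulAut kappaRep] C4

/-- The representation of `C4` on `ℤ²` where the generator acts by multiplication by `-1`. -/
noncomputable def negRep : Representation ℤ C4 (Fin 2 → ℤ) :=
  zmodPowHom 4 (-1 : Module.End ℤ (Fin 2 → ℤ))
    (by rw [show (4 : ℕ) = 2 * 2 from rfl, pow_mul, neg_one_sq, one_pow])

/-- `N₁ = ℤ² × ℤ/2`. -/
abbrev N1 : Type := Multiplicative (Fin 2 → ℤ) × Multiplicative (ZMod 2)

/-- `N₂ = ℤ² ⋊ ℤ/4`, the generator of `ℤ/4` acting on `ℤ²` by multiplication by `-1`. -/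
noncomputable abbrev N2 : Type := (Multiplicative (Fin 2 → ℤ)) ⋊[repMulAut negRep] C4

/-! Write `mk v x` for the element `(v, κˣ)` of `Γ₁`. Since `(v, κˣ)² = (v + κˣv, κ²ˣ)` and `κ²`
fixes `e₁, e₂` and negates `e₃, …, e₆`, the elements of order two are the `(v, κ²)` with
`v₁ = v₂ = 0`. Conjugation by `(u, κˣ)` sends `(v, κ²)` to `(κˣv + (u - κ²u), κ²)`, and `u - κ²u`
runs over the vectors that vanish in the first two coordinates and are even in the others. So the
class of `(v, κ²)` is determined by `v mod 2` up to the reduction of `κ`, which swaps the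
coordinates `3 ↔ 4` and `5 ↔ 6`; on `(ℤ/2)⁴` this involution has four fixed points and six orbits
of size two.

A subgroup `⟨g⟩` of order two is normalised exactly by the centraliser of `g`. The centraliser
meets the translations in `ℤ²` (the first two coordinates), and maps onto `{1, κ²}` in `C4` when
`v mod 2` is not fixed by the swap, giving `ℤ² × ⟨g⟩`. Otherwise (say `v₄ = v₃`, `v₆ = v₅`) it
also contains `s = ((0, 0, 0, v₃, 0, v₅), κ)`, which satisfies `s² = g` and inverts the
translations, giving `ℤ² ⋊ ℤ/4`. -/

open Subgroup Multiplicative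

section

variable {G Q : Type*} [Group G] [Group Q]

theorem mem_zpowers_iff_of_orderOf_eq_two {g x : G} (hg : orderOf g = 2) :
    x ∈ zpowers g ↔ x = 1 ∨ x = g := by
  classical
  have hfin : IsOfFinOrder g := orderOf_pos_iff.mp (by omega)
  rw [hfin.mem_zpowers_iff_mem_range_orderOf, hg]
  simp [Finset.range_add_one, eq_comm, or_comm]

theorem normalizer_zpowers_eq_centralizer_of_orderOf_eq_two {g : G} (hg : orderOf g = 2) :
    normalizer (zpowers g : Set G) = centralizer {g} := by
  ext γ
  have hg1 : g ≠ 1 := by rintro rfl; simp at hg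
  simp only [mem_normalizer_iff, mem_centralizer_singleton_iff,
    mem_zpowers_iff_of_orderOf_eq_two hg]
  constructor
  · intro h
    rcases ((h g).mp (Or.inr rfl)) with h1 | h1
    · exact absurd (by simpa using h1) hg1
    · exact mul_inv_eq_iff_eq_mul.mp h1
  · intro h x
    have hconj : γ * g * γ⁻¹ = g := by rw [h]; group
    conv_rhs => rw [← hconj]
    simp [mul_inv_eq_one]

theorem exists_map_conj_zpowers_eq_iff_isConj {g h : G} (hg : g ≠ 1) (hh : orderOf h = 2) :
    (∃ γ : G, (zpowers g).map (MulAut.conj γ).toMonoidHom = zpowers h) ↔ IsConj g h := by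
  simp only [isConj_iff, MonoidHom.map_zpowers, MulEquiv.coe_toMonoidHom, MulAut.conj_apply]
  refine exists_congr fun γ => ⟨fun hγ => ?_, fun hγ => hγ ▸ rfl⟩
  have hmem : γ * g * γ⁻¹ ∈ zpowers h := hγ ▸ mem_zpowers _
  rcases (mem_zpowers_iff_of_orderOf_eq_two hh).mp hmem with h1 | h1
  · exact absurd (by simpa using h1) hg
  · exact h1

theorem exists_orderOf_eq_two_zpowers_eq {K : Subgroup G} (hK : Nat.card K = 2) :
    ∃ g : G, orderOf g = 2 ∧ zpowers g = K := by
  have : Finite K := Nat.finite_of_card_ne_zero (by omega)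
  have : Nontrivial K := Finite.one_lt_card_iff_nontrivial.mp (by omega)
  obtain ⟨y, hy⟩ := exists_ne (1 : K)
  have hy2 : orderOf (y : G) = 2 := by
    rw [orderOf_coe]
    refine (Nat.prime_two.eq_one_or_self_of_dvd _ (hK ▸ orderOf_dvd_natCard y)).resolve_left ?_
    rwa [orderOf_eq_one_iff]
  refine ⟨y, hy2, eq_of_le_of_card_ge (zpowers_le.mpr y.2) ?_⟩
  rw [Nat.card_zpowers, hy2, hK]

theorem Subgroup.le_of_map_le_of_inf_ker_le (π : G →* Q) {R S : Subgroup G} (hRS : R ≤ S)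
    (hmap : S.map π ≤ R.map π) (hker : S ⊓ π.ker ≤ R) : S ≤ R := by
  intro s hs
  obtain ⟨r, hr, hrs⟩ := hmap ⟨s, hs, rfl⟩
  have hker' : r⁻¹ * s ∈ R := hker ⟨S.mul_mem (S.inv_mem (hRS hr)) hs, by simp [hrs]⟩
  simpa using R.mul_mem hr hker'

theorem SemidirectProduct.lift_injective_of_comp {N H : Type*} [Group N] [Group H]
    {φ : H →* MulAut N} {fn : N →* G} {fh : H →* G}
    {hc : ∀ h, fn.comp (φ h).toMonoidHom = (MulAut.conj (fh h)).toMonoidHom.comp fn}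
    (π : G →* Q) (hfn : Function.Injective fn) (hπn : π.comp fn = 1)
    (hπh : Function.Injective (π.comp fh)) : Function.Injective (lift fn fh hc) := by
  rw [injective_iff_map_eq_one]
  rintro ⟨n, h⟩ hnh
  have hπ : π (fn n) * π (fh h) = 1 := by rw [← map_mul]; exact (congrArg π hnh).trans π.map_one
  rw [show π (fn n) = 1 from DFunLike.congr_fun hπn n, one_mul] at hπ
  obtain rfl : h = 1 := hπh (hπ.trans (map_one _).symm)
  have hn : fn n = 1 := by simpa using hnh
  obtain rfl : n = 1 := hfn (hn.trans (map_one _).symm)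
  rfl

theorem MonoidHom.noncommCoprod_injective_of_comp {M P : Type*} [Group M] [Group P]
    {f : M →* G} {g : P →* G} {comm : ∀ m n, Commute (f m) (g n)}
    (π : G →* Q) (hf : Function.Injective f) (hπf : π.comp f = 1)
    (hπg : Function.Injective (π.comp g)) : Function.Injective (f.noncommCoprod g comm) := by
  rw [injective_iff_map_eq_one]
  rintro ⟨m, p⟩ hmp
  have hπ : π (f m) * π (g p) = 1 := by rw [← map_mul]; exact (congrArg π hmp).trans π.map_one
  rw [show π (f m) = 1 from DFunLike.congr_fun hπf m, one_mul] at hπ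
  obtain rfl : p = 1 := hπg (hπ.trans (map_one _).symm)
  have hm : f m = 1 := by simpa using hmp
  obtain rfl : m = 1 := hf (hm.trans (map_one _).symm)
  rfl

theorem MonoidHom.comp_zmodPowHom {M N : Type*} [Monoid M] [Monoid N] (f : M →* N) (n : ℕ)
    [NeZero n] (g : M) (h : g ^ n = 1) :
    f.comp (zmodPowHom n g h) = zmodPowHom n (f g) (by rw [← map_pow, h, map_one]) :=
  MonoidHom.ext fun _ => map_pow f g _

theorem zmodPowHom_injective {M : Type*} [Monoid M] {n : ℕ} [NeZero n] {g : M} (h : g ^ n = 1)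
    (hg : orderOf g = n) : Function.Injective (zmodPowHom n g h) := fun a b hab =>
  toAdd.injective <| ZMod.val_injective n <|
    pow_injOn_Iio_orderOf (hg ▸ ZMod.val_lt (toAdd a)) (hg ▸ ZMod.val_lt (toAdd b)) hab

theorem MonoidHom.nonempty_mulEquiv_of_range_eq {M : Type*} [Group M] (f : M →* G)
    (hf : Function.Injective f) {S : Subgroup G} (hS : f.range = S) : Nonempty (S ≃* M) :=
  ⟨((MonoidHom.ofInjective hf).trans (MulEquiv.subgroupCongr hS)).symm⟩

end

namespace Gamma1

open SemidirectProduct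

def mk (v : Fin 6 → ℤ) (x : ZMod 4) : Gamma1 := ⟨ofAdd v, ofAdd x⟩

noncomputable def act (x : ZMod 4) : Module.End ℤ (Fin 6 → ℤ) := kappaRep (ofAdd x)

theorem act_act (x y : ZMod 4) (v : Fin 6 → ℤ) : act x (act y v) = act (x + y) v := by
  simp [act, ofAdd_add, map_mul]

theorem act_zero (v : Fin 6 → ℤ) : act 0 v = v := by
  simp [act]

theorem act_one (v : Fin 6 → ℤ) : act 1 v = ![-v 0, -v 1, v 3, -v 2, v 5, -v 4] := by
  change (Matrix.toLinAlgEquiv' kappaMatrix ^ 1) v = _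
  ext i; fin_cases i <;> simp [kappaMatrix, Matrix.mulVec, dotProduct, Fin.sum_univ_succ]

theorem act_two (v : Fin 6 → ℤ) : act 2 v = ![v 0, v 1, -v 2, -v 3, -v 4, -v 5] := by
  rw [show (2 : ZMod 4) = 1 + 1 from rfl, ← act_act, act_one, act_one]
  ext i; fin_cases i <;> simp

theorem mk_mul_mk (v w : Fin 6 → ℤ) (x y : ZMod 4) :
    mk v x * mk w y = mk (v + act x w) (x + y) := rfl

theorem one_eq_mk : (1 : Gamma1) = mk 0 0 := rfl

theorem mk_eq_mk_iff {v w : Fin 6 → ℤ} {x y : ZMod 4} : mk v x = mk w y ↔ v = w ∧ x = y := by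
  simp [mk, SemidirectProduct.ext_iff]

theorem exists_eq_mk (γ : Gamma1) : ∃ v x, γ = mk v x := ⟨toAdd γ.left, toAdd γ.right, rfl⟩

theorem mk_mul_eq_mul_mk_iff {u v w : Fin 6 → ℤ} {x y : ZMod 4} :
    mk u x * mk v y = mk w y * mk u x ↔ u + act x v = w + act y u := by
  rw [mk_mul_mk, mk_mul_mk, mk_eq_mk_iff, add_comm x y]; simp

theorem orderOf_mk_eq_two_iff {v : Fin 6 → ℤ} {x : ZMod 4} :
    orderOf (mk v x) = 2 ↔ x = 2 ∧ v 0 = 0 ∧ v 1 = 0 := by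
  rw [orderOf_eq_prime_iff, pow_two, mk_mul_mk, one_eq_mk, Ne, mk_eq_mk_iff, mk_eq_mk_iff]
  constructor
  · rintro ⟨⟨hv, hx⟩, hne⟩
    rcases (by decide : ∀ y : ZMod 4, y + y = 0 → y = 0 ∨ y = 2) x hx with rfl | rfl
    · exact absurd ⟨funext fun i => by simpa [act_zero] using congrFun hv i, rfl⟩ hne
    · exact ⟨rfl, by simpa [act_two] using congrFun hv 0, by simpa [act_two] using congrFun hv 1⟩
  · rintro ⟨rfl, h0, h1⟩
    refine ⟨⟨?_, rfl⟩, fun h => absurd h.2 (by decide)⟩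
    ext i; fin_cases i <;> simp [act_two, h0, h1]

def modTwo : (Fin 6 → ℤ) →+ (Fin 6 → ZMod 2) := (Int.castAddHom (ZMod 2)).compLeft (Fin 6)

def swapPairs (b : Fin 6 → ZMod 2) : Fin 6 → ZMod 2 := ![b 0, b 1, b 3, b 2, b 5, b 4]

theorem modTwo_act_one (v : Fin 6 → ℤ) : modTwo (act 1 v) = swapPairs (modTwo v) := by
  ext i; fin_cases i <;> simp [modTwo, swapPairs, act_one, ZMod.neg_eq_self_mod_two]

theorem modTwo_act_two (v : Fin 6 → ℤ) : modTwo (act 2 v) = modTwo v := by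
  ext i; fin_cases i <;> simp [modTwo, act_two, ZMod.neg_eq_self_mod_two]

theorem modTwo_act_three (v : Fin 6 → ℤ) : modTwo (act 3 v) = swapPairs (modTwo v) := by
  rw [show (3 : ZMod 4) = 1 + 2 from rfl, ← act_act, modTwo_act_one, modTwo_act_two]

theorem modTwo_act (x : ZMod 4) (v : Fin 6 → ℤ) :
    modTwo (act x v) = modTwo v ∨ modTwo (act x v) = swapPairs (modTwo v) := by
  rcases (by decide : ∀ y : ZMod 4, y = 0 ∨ y = 1 ∨ y = 2 ∨ y = 3) x with rfl | rfl | rfl | rfl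
  · simp [act_zero]
  · simp [modTwo_act_one]
  · simp [modTwo_act_two]
  · simp [modTwo_act_three]

theorem modTwo_act_eq_of_mk_mul_eq_mul_mk {u v w : Fin 6 → ℤ} {x : ZMod 4}
    (h : mk u x * mk v 2 = mk w 2 * mk u x) : modTwo (act x v) = modTwo w := by
  have hmod := congrArg modTwo (mk_mul_eq_mul_mk_iff.mp h)
  rwa [map_add, map_add, modTwo_act_two, add_comm (modTwo w), add_left_cancel_iff] at hmod

theorem exists_act_two_sub_eq_iff {d : Fin 6 → ℤ} :
    (∃ u, act 2 u - u = d) ↔ d 0 = 0 ∧ d 1 = 0 ∧ modTwo d = 0 := by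
  constructor
  · rintro ⟨u, rfl⟩
    refine ⟨by simp [act_two], by simp [act_two], ?_⟩
    rw [map_sub, modTwo_act_two, sub_self]
  · rintro ⟨h0, h1, hd⟩
    have heven : ∀ i, 2 ∣ d i := fun i => by
      simpa [modTwo, ZMod.intCast_zmod_eq_zero_iff_dvd] using congrFun hd i
    choose c hc using heven
    refine ⟨-c, ?_⟩
    ext i; fin_cases i <;> simp [act_two, h0, h1, hc] <;> ring

theorem isConj_mk_two_iff {v w : Fin 6 → ℤ} (hv0 : v 0 = 0) (hv1 : v 1 = 0) (hw0 : w 0 = 0)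
    (hw1 : w 1 = 0) :
    IsConj (mk v 2) (mk w 2) ↔ modTwo w = modTwo v ∨ modTwo w = swapPairs (modTwo v) := by
  simp only [isConj_iff, mul_inv_eq_iff_eq_mul]
  constructor
  · rintro ⟨c, hc⟩
    obtain ⟨u, x, rfl⟩ := exists_eq_mk c
    rw [← modTwo_act_eq_of_mk_mul_eq_mul_mk hc]
    exact modTwo_act x v
  · have hconj : ∀ x, act x v 0 = 0 → act x v 1 = 0 → modTwo w = modTwo (act x v) →
        ∃ c, c * mk v 2 = mk w 2 * c := by
      intro x h0 h1 hmod
      obtain ⟨u, hu⟩ := (exists_act_two_sub_eq_iff (d := act x v - w)).mpr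
        ⟨by simp [h0, hw0], by simp [h1, hw1], by rw [map_sub, hmod, sub_self]⟩
      refine ⟨mk u x, mk_mul_eq_mul_mk_iff.mpr ?_⟩
      rw [sub_eq_sub_iff_add_eq_add] at hu
      rw [add_comm u, add_comm w, hu]
    rintro (hmod | hmod)
    · exact hconj 0 (by simp [act_zero, hv0]) (by simp [act_zero, hv1]) (by rw [act_zero, hmod])
    · exact hconj 1 (by simp [act_one, hv0]) (by simp [act_one, hv1])
        (by rw [modTwo_act_one, hmod])

-- One vector for each orbit of `swapPairs` on the vectors mod 2 vanishing in the first two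
-- coordinates: the six orbits of size two, then the four fixed points.
def classRep : Fin 10 → Fin 6 → ℤ :=
  ![![0,0,1,0,0,0], ![0,0,0,0,1,0], ![0,0,1,0,1,0], ![0,0,1,0,0,1], ![0,0,1,1,1,0],
    ![0,0,1,0,1,1], ![0,0,0,0,0,0], ![0,0,1,1,0,0], ![0,0,0,0,1,1], ![0,0,1,1,1,1]]

theorem classRep_zero_one : ∀ j, classRep j 0 = 0 ∧ classRep j 1 = 0 := by decide

theorem eq_of_modTwo_classRep : ∀ j k, modTwo (classRep k) = modTwo (classRep j) ∨
    modTwo (classRep k) = swapPairs (modTwo (classRep j)) → j = k := by decide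

theorem exists_modTwo_classRep : ∀ b : Fin 6 → ZMod 2, b 0 = 0 → b 1 = 0 →
    ∃ j, b = modTwo (classRep j) ∨ b = swapPairs (modTwo (classRep j)) := by decide

theorem swapPairs_modTwo_classRep_ne : ∀ j : Fin 10, (j : ℕ) < 6 →
    swapPairs (modTwo (classRep j)) ≠ modTwo (classRep j) := by decide

theorem classRep_pairs_eq : ∀ j : Fin 10, 6 ≤ (j : ℕ) →
    classRep j 3 = classRep j 2 ∧ classRep j 5 = classRep j 4 := by decide

def transl : Multiplicative (Fin 2 → ℤ) →* Gamma1 where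
  toFun a := mk ![toAdd a 0, toAdd a 1, 0, 0, 0, 0] 0
  map_one' := by rw [one_eq_mk, mk_eq_mk_iff]; exact ⟨by ext i; fin_cases i <;> rfl, rfl⟩
  map_mul' a b := by
    rw [mk_mul_mk, act_zero, mk_eq_mk_iff]
    exact ⟨by ext i; fin_cases i <;> simp, rfl⟩

theorem transl_apply (a : Multiplicative (Fin 2 → ℤ)) :
    transl a = mk ![toAdd a 0, toAdd a 1, 0, 0, 0, 0] 0 := rfl

theorem transl_injective : Function.Injective transl := by
  intro a b hab
  have h := (mk_eq_mk_iff.mp hab).1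
  ext i; fin_cases i
  · exact congrFun h 0
  · exact congrFun h 1

theorem rightHom_comp_transl : rightHom.comp transl = 1 := rfl

section Centralizer

variable {w : Fin 6 → ℤ}

theorem transl_mem_centralizer (a : Multiplicative (Fin 2 → ℤ)) :
    transl a ∈ centralizer {mk w 2} := by
  rw [mem_centralizer_singleton_iff, transl_apply, mk_mul_eq_mul_mk_iff, act_zero, act_two]
  ext i; fin_cases i <;> simp [add_comm]

theorem centralizer_inf_ker_le_range_transl :
    centralizer {mk w 2} ⊓ rightHom.ker ≤ transl.range := by
  intro γ hγ
  obtain ⟨hγ, hker⟩ := mem_inf.mp hγ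
  obtain ⟨u, x, rfl⟩ := exists_eq_mk γ
  obtain rfl : x = 0 := ofAdd.injective (MonoidHom.mem_ker.mp hker)
  rw [mem_centralizer_singleton_iff, mk_mul_eq_mul_mk_iff, act_zero,
    add_comm] at hγ
  have hu := add_left_cancel hγ
  refine ⟨ofAdd ![u 0, u 1], mk_eq_mk_iff.mpr ⟨?_, rfl⟩⟩
  ext i
  have hi := congrFun hu i
  fin_cases i <;> simp [act_two] at hi ⊢ <;> linarith

theorem mk_two_pow_two (hw0 : w 0 = 0) (hw1 : w 1 = 0) : mk w 2 ^ 2 = 1 :=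
  orderOf_mk_eq_two_iff.mpr ⟨rfl, hw0, hw1⟩ ▸ pow_orderOf_eq_one _

theorem eq_zero_or_eq_two_of_mk_mem_centralizer (hσ : swapPairs (modTwo w) ≠ modTwo w)
    {u : Fin 6 → ℤ} {x : ZMod 4} (h : mk u x ∈ centralizer {mk w 2}) : x = 0 ∨ x = 2 := by
  have hmod := modTwo_act_eq_of_mk_mul_eq_mul_mk (mem_centralizer_singleton_iff.mp h)
  rcases (by decide : ∀ y : ZMod 4, y = 0 ∨ y = 1 ∨ y = 2 ∨ y = 3) x with rfl | rfl | rfl | rfl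
  · exact Or.inl rfl
  · exact absurd (modTwo_act_one w ▸ hmod) hσ
  · exact Or.inr rfl
  · exact absurd (modTwo_act_three w ▸ hmod) hσ

theorem commute_transl_zmodPowHom (hg : mk w 2 ^ 2 = 1) (a : Multiplicative (Fin 2 → ℤ))
    (t : Multiplicative (ZMod 2)) : Commute (transl a) (zmodPowHom 2 (mk w 2) hg t) :=
  Commute.pow_right (mem_centralizer_singleton_iff.mp (transl_mem_centralizer a)) _

variable (w) in
noncomputable def homN1 (hg : mk w 2 ^ 2 = 1) : N1 →* Gamma1 :=
  transl.noncommCoprod (zmodPowHom 2 (mk w 2) hg) (commute_transl_zmodPowHom hg)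

theorem nonempty_centralizer_mk_two_equiv_N1 (hw0 : w 0 = 0) (hw1 : w 1 = 0)
    (hσ : swapPairs (modTwo w) ≠ modTwo w) : Nonempty (centralizer {mk w 2} ≃* N1) := by
  have hg := mk_two_pow_two hw0 hw1
  have hinj : Function.Injective (homN1 w hg) := by
    refine MonoidHom.noncommCoprod_injective_of_comp rightHom transl_injective
      rightHom_comp_transl ?_
    rw [MonoidHom.comp_zmodPowHom]
    exact zmodPowHom_injective _
      (show orderOf (ofAdd (2 : ZMod 4)) = 2 from orderOf_eq_prime (by decide) (by decide))
  have hle : (homN1 w hg).range ≤ centralizer {mk w 2} := by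
    rw [homN1, MonoidHom.noncommCoprod_range, sup_le_iff]
    constructor
    · rintro _ ⟨a, rfl⟩
      exact transl_mem_centralizer a
    · rintro _ ⟨t, rfl⟩
      exact pow_mem (mem_centralizer_singleton_iff.mpr rfl) _
  refine (homN1 w hg).nonempty_mulEquiv_of_range_eq hinj
    (le_antisymm hle (le_of_map_le_of_inf_ker_le rightHom hle ?_ ?_))
  · rintro _ ⟨γ, hγ, rfl⟩
    obtain ⟨u, x, rfl⟩ := exists_eq_mk γ
    rcases eq_zero_or_eq_two_of_mk_mem_centralizer hσ hγ with rfl | rfl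
    · exact ⟨1, one_mem _, rfl⟩
    · exact ⟨homN1 w hg (1, ofAdd 1), ⟨_, rfl⟩, rfl⟩
  · refine centralizer_inf_ker_le_range_transl.trans ?_
    rintro _ ⟨a, rfl⟩
    exact ⟨(a, 1), by simp [homN1]⟩

variable (w) in
def sqrtMk : Gamma1 := mk ![0, 0, 0, w 2, 0, w 4] 1

theorem sqrtMk_mul_self (hw0 : w 0 = 0) (hw1 : w 1 = 0) (h3 : w 3 = w 2) (h5 : w 5 = w 4) :
    sqrtMk w * sqrtMk w = mk w 2 := by
  rw [sqrtMk, mk_mul_mk, act_one, mk_eq_mk_iff]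
  exact ⟨by ext i; fin_cases i <;> simp [hw0, hw1, h3, h5], rfl⟩

theorem sqrtMk_mul_transl (a : Multiplicative (Fin 2 → ℤ)) :
    sqrtMk w * transl a = transl a⁻¹ * sqrtMk w := by
  rw [sqrtMk, transl_apply, transl_apply, mk_mul_mk, mk_mul_mk, act_one, act_zero, mk_eq_mk_iff]
  exact ⟨by ext i; fin_cases i <;> simp, rfl⟩

theorem sqrtMk_pow_mul_transl_mul_inv (n : ℕ) (a : Multiplicative (Fin 2 → ℤ)) :
    sqrtMk w ^ n * transl a * (sqrtMk w ^ n)⁻¹ =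
      transl (ofAdd (((-1 : Module.End ℤ (Fin 2 → ℤ)) ^ n) (toAdd a))) := by
  induction n with
  | zero => simp
  | succ n ih =>
    have hconj : sqrtMk w ^ (n + 1) * transl a * (sqrtMk w ^ (n + 1))⁻¹ =
        sqrtMk w * (sqrtMk w ^ n * transl a * (sqrtMk w ^ n)⁻¹) * (sqrtMk w)⁻¹ := by group
    rw [hconj, ih, sqrtMk_mul_transl, mul_inv_cancel_right, pow_succ', Module.End.mul_apply]
    simp

variable (w) in
noncomputable def homN2 (hs : sqrtMk w ^ 4 = 1) : N2 →* Gamma1 :=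
  SemidirectProduct.lift transl (zmodPowHom 4 (sqrtMk w) hs) fun _ =>
    MonoidHom.ext fun _ => (sqrtMk_pow_mul_transl_mul_inv _ _).symm

theorem nonempty_centralizer_mk_two_equiv_N2 (hw0 : w 0 = 0) (hw1 : w 1 = 0) (h3 : w 3 = w 2)
    (h5 : w 5 = w 4) : Nonempty (centralizer {mk w 2} ≃* N2) := by
  have hsq := sqrtMk_mul_self hw0 hw1 h3 h5
  have hs : sqrtMk w ^ 4 = 1 := by
    rw [show sqrtMk w ^ 4 = (sqrtMk w * sqrtMk w) ^ 2 by rw [← sq, ← pow_mul], hsq,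
      mk_two_pow_two hw0 hw1]
  have hsC : sqrtMk w ∈ centralizer {mk w 2} := by
    rw [mem_centralizer_singleton_iff, ← hsq, mul_assoc]
  have hinj : Function.Injective (homN2 w hs) := by
    refine lift_injective_of_comp rightHom transl_injective rightHom_comp_transl ?_
    rw [MonoidHom.comp_zmodPowHom]
    exact zmodPowHom_injective _ (show orderOf (ofAdd (1 : ZMod 4)) = 4 by
      rw [orderOf_ofAdd_eq_addOrderOf, ZMod.addOrderOf_one])
  have hle : (homN2 w hs).range ≤ centralizer {mk w 2} := by
    rintro _ ⟨⟨a, z⟩, rfl⟩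
    exact mul_mem (transl_mem_centralizer a) (pow_mem hsC _)
  refine (homN2 w hs).nonempty_mulEquiv_of_range_eq hinj
    (le_antisymm hle (le_of_map_le_of_inf_ker_le rightHom hle ?_ ?_))
  · rintro _ ⟨γ, -, rfl⟩
    obtain ⟨u, x, rfl⟩ := exists_eq_mk γ
    refine ⟨homN2 w hs (inr (ofAdd x)), ⟨_, rfl⟩, ?_⟩
    rw [homN2, lift_inr, ← MonoidHom.comp_apply, MonoidHom.comp_zmodPowHom]
    change ofAdd (1 : ZMod 4) ^ x.val = ofAdd x
    rw [← ofAdd_nsmul, nsmul_one, ZMod.natCast_zmod_val]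
  · refine centralizer_inf_ker_le_range_transl.trans ?_
    rintro _ ⟨a, rfl⟩
    exact ⟨inl a, by simp [homN2]⟩

end Centralizer

end Gamma1

open Gamma1

/-- `Γ₁` has exactly ten conjugacy classes of subgroups of order two; six of the
classes consist of subgroups with normalizer isomorphic to `ℤ² × ℤ/2`, and four consist of
subgroups with normalizer isomorphic to `ℤ² ⋊ ℤ/4` (the generator of `ℤ/4` acting on `ℤ²` by
multiplication by `-1`). -/
theorem Gamma1_order_two_conjugacy_classes :
    ∃ H : Fin 10 → Subgroup Gamma1,
      (∀ j, Nat.card (H j) = 2) ∧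
      (∀ j k : Fin 10, j ≠ k → ∀ γ : Gamma1,
        Subgroup.map (MulAut.conj γ).toMonoidHom (H j) ≠ H k) ∧
      (∀ K : Subgroup Gamma1, Nat.card K = 2 → ∃ (j : Fin 10) (γ : Gamma1),
        Subgroup.map (MulAut.conj γ).toMonoidHom (H j) = K) ∧
      (∀ j : Fin 10, (j : ℕ) < 6 → Nonempty (Subgroup.normalizer (H j : Set Gamma1) ≃* N1)) ∧
      (∀ j : Fin 10, 6 ≤ (j : ℕ) → Nonempty (Subgroup.normalizer (H j : Set Gamma1) ≃* N2)) := by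
  have horder (j : Fin 10) : orderOf (mk (classRep j) 2) = 2 :=
    orderOf_mk_eq_two_iff.mpr ⟨rfl, classRep_zero_one j⟩
  have hne (j : Fin 10) : mk (classRep j) 2 ≠ 1 := by
    intro h; simpa [h] using horder j
  refine ⟨fun j => zpowers (mk (classRep j) 2), fun j => by rw [Nat.card_zpowers, horder],
    fun j k hjk γ hγ => ?_, fun K hK => ?_, fun j hj => ?_, fun j hj => ?_⟩
  · have hconj := (exists_map_conj_zpowers_eq_iff_isConj (hne j) (horder k)).mp ⟨γ, hγ⟩
    rw [isConj_mk_two_iff (classRep_zero_one j).1 (classRep_zero_one j).2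
      (classRep_zero_one k).1 (classRep_zero_one k).2] at hconj
    exact hjk (eq_of_modTwo_classRep j k hconj)
  · obtain ⟨g, hg, rfl⟩ := exists_orderOf_eq_two_zpowers_eq hK
    obtain ⟨v, x, rfl⟩ := exists_eq_mk g
    obtain ⟨rfl, hv0, hv1⟩ := orderOf_mk_eq_two_iff.mp hg
    obtain ⟨j, hj⟩ := exists_modTwo_classRep (modTwo v) (by simp [modTwo, hv0])
      (by simp [modTwo, hv1])
    exact ⟨j, (exists_map_conj_zpowers_eq_iff_isConj (hne j) hg).mpr
      ((isConj_mk_two_iff (classRep_zero_one j).1 (classRep_zero_one j).2 hv0 hv1).mpr hj)⟩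
  · rw [normalizer_zpowers_eq_centralizer_of_orderOf_eq_two (horder j)]
    exact nonempty_centralizer_mk_two_equiv_N1 (classRep_zero_one j).1 (classRep_zero_one j).2
      (swapPairs_modTwo_classRep_ne j hj)
  · rw [normalizer_zpowers_eq_centralizer_of_orderOf_eq_two (horder j)]
    exact nonempty_centralizer_mk_two_equiv_N2 (classRep_zero_one j).1 (classRep_zero_one j).2
      (classRep_pairs_eq j hj).1 (classRep_pairs_eq j hj).2
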